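/- arXiv:1409.2816 — 3 statements merged into one kernel-verified Lean document; each statement's English description precedes it below -/
import Mathlib

section
/- The centralizer in Sp(2n, ℝ) of the image of the diagonal embedding SL(2,ℝ) → Sp(2n,ℝ), sending [[a,b],[c,d]] to the block matrix [[a·I_n, b·I_n],[c·I_n, d·I_n]], equals the set of block matrices [[Q, 0],[0, Q]] with Q ∈ O(n). -/
open Matrix

/-- The standard symplectic form `Ω = [[0, I],[-I, 0]]`. -/
def Omega (n : ℕ) : Matrix (Fin n ⊕ Fin n) (Fin n ⊕ Fin n) ℝ :=
  Matrix.fromBlocks 0 1 (-1) 0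

/-- The diagonal embedding `SL(2,ℝ) → Sp(2n,ℝ)`,
`[[a,b],[c,d]] ↦ [[a·I_n, b·I_n],[c·I_n, d·I_n]]`. -/
def rhoDiag (n : ℕ) (g : Matrix (Fin 2) (Fin 2) ℝ) :
    Matrix (Fin n ⊕ Fin n) (Fin n ⊕ Fin n) ℝ :=
  Matrix.fromBlocks (g 0 0 • 1) (g 0 1 • 1) (g 1 0 • 1) (g 1 1 • 1)

/-!
Commuting with the images of the two elementary unipotents `[[1, 1], [0, 1]]` and
`[[1, 0], [1, 1]]` already kills the off-diagonal blocks of `M` and equates its diagonal ones,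
and `diag(Q, Q)` preserves `Ω` exactly when `QᵀQ = 1`. Conversely `diag(Q, Q)` commutes with
every block matrix whose blocks are scalars.
-/

namespace Matrix

variable {n R : Type*} [Fintype n] [DecidableEq n]

theorem commute_fromBlocks_diagonal_fromBlocks_smul_one [CommSemiring R]
    (Q : Matrix n n R) (a b c d : R) :
    Commute (fromBlocks Q 0 0 Q) (fromBlocks (a • 1) (b • 1) (c • 1) (d • 1)) := by
  simp only [Commute, SemiconjBy, fromBlocks_multiply, mul_zero, zero_mul, add_zero, zero_add,
    Matrix.mul_smul, Matrix.smul_mul, mul_one, one_mul]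

theorem eq_fromBlocks_of_commute_unipotents [Ring R] (M : Matrix (n ⊕ n) (n ⊕ n) R)
    (hU : Commute M (fromBlocks 1 1 0 1)) (hL : Commute M (fromBlocks 1 0 1 1)) :
    M = fromBlocks M.toBlocks₁₁ 0 0 M.toBlocks₁₁ := by
  rw [← fromBlocks_toBlocks M] at hU hL
  simp only [Commute, SemiconjBy, fromBlocks_multiply, mul_one, one_mul, mul_zero, zero_mul,
    add_zero, zero_add, fromBlocks_inj] at hU hL
  obtain ⟨hC, hAD, -, -⟩ := hU
  obtain ⟨hB, -, -, -⟩ := hL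
  have hC0 : M.toBlocks₂₁ = 0 := by simpa using hC.symm
  have hB0 : M.toBlocks₁₂ = 0 := by simpa using hB
  have hDA : M.toBlocks₂₂ = M.toBlocks₁₁ := by simpa [hB0] using hAD.symm
  conv_lhs => rw [← fromBlocks_toBlocks M, hB0, hC0, hDA]

theorem fromBlocks_diagonal_symplectic_iff [CommRing R] (Q : Matrix n n R) :
    (fromBlocks Q 0 0 Q)ᵀ * fromBlocks 0 1 (-1) 0 * fromBlocks Q 0 0 Q
        = fromBlocks 0 1 (-1) 0 ↔ Qᵀ * Q = 1 := by
  simp only [fromBlocks_transpose, transpose_zero, fromBlocks_multiply, mul_zero, zero_mul,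
    mul_one, mul_neg, neg_mul, add_zero, zero_add, fromBlocks_inj, neg_zero, neg_inj, true_and,
    and_true, and_self]

end Matrix

theorem rhoDiag_upper_unipotent (n : ℕ) :
    rhoDiag n !![1, 1; 0, 1] = fromBlocks 1 1 0 1 := by
  simp [rhoDiag]

theorem rhoDiag_lower_unipotent (n : ℕ) :
    rhoDiag n !![1, 0; 1, 1] = fromBlocks 1 0 1 1 := by
  simp [rhoDiag]

theorem stmt15 (n : ℕ) (M : Matrix (Fin n ⊕ Fin n) (Fin n ⊕ Fin n) ℝ)
    (hM : Mᵀ * Omega n * M = Omega n) :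
    (∀ g : Matrix (Fin 2) (Fin 2) ℝ, g.det = 1 →
        M * rhoDiag n g = rhoDiag n g * M) ↔
      ∃ Q : Matrix (Fin n) (Fin n) ℝ, Qᵀ * Q = 1 ∧
        M = Matrix.fromBlocks Q 0 0 Q := by
  constructor
  · intro h
    have hU := rhoDiag_upper_unipotent n ▸ h !![1, 1; 0, 1] (by simp [det_fin_two_of])
    have hL := rhoDiag_lower_unipotent n ▸ h !![1, 0; 1, 1] (by simp [det_fin_two_of])
    have hMQ := eq_fromBlocks_of_commute_unipotents M hU hL
    refine ⟨M.toBlocks₁₁, ?_, hMQ⟩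
    rwa [hMQ, Omega, fromBlocks_diagonal_symplectic_iff] at hM
  · rintro ⟨Q, -, rfl⟩ g -
    exact commute_fromBlocks_diagonal_fromBlocks_smul_one Q _ _ _ _
end

section
/- The centralizer in SU(p,q) (p > q) of the set of matrices of the form [[α·I_q, 0, β·I_q],[0, I_{p−q}, 0],[conj(β)·I_q, 0, conj(α)·I_q]] with |α|² − |β|² = 1 equals the set of block-diagonal matrices diag(U, F, U) with U ∈ U(q), F ∈ U(p−q), and det(U)²·det(F) = 1. -/
open Matrix

/-- The form `J = diag(I_q, I_{p-q}, -I_q)` defining `SU(p,q)` with block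
ordering `q, p-q, q`. -/
def Jpq (p q : ℕ) : Matrix (Fin q ⊕ (Fin (p - q) ⊕ Fin q)) (Fin q ⊕ (Fin (p - q) ⊕ Fin q)) ℂ :=
  Matrix.diagonal (fun i => match i with
    | Sum.inl _ => 1
    | Sum.inr (Sum.inl _) => 1
    | Sum.inr (Sum.inr _) => -1)

/-- The image of `SU(1,1)` under the standard embedding:
`[[α·I_q, 0, β·I_q],[0, I_{p-q}, 0],[β̄·I_q, 0, ᾱ·I_q]]`. -/
def EEmb (p q : ℕ) (α β : ℂ) :
    Matrix (Fin q ⊕ (Fin (p - q) ⊕ Fin q)) (Fin q ⊕ (Fin (p - q) ⊕ Fin q)) ℂ :=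
  Matrix.of fun i j => match i, j with
    | Sum.inl i', Sum.inl j' => if i' = j' then α else 0
    | Sum.inl i', Sum.inr (Sum.inr j') => if i' = j' then β else 0
    | Sum.inr (Sum.inl i'), Sum.inr (Sum.inl j') => if i' = j' then 1 else 0
    | Sum.inr (Sum.inr i'), Sum.inl j' => if i' = j' then (starRingEnd ℂ) β else 0
    | Sum.inr (Sum.inr i'), Sum.inr (Sum.inr j') => if i' = j' then (starRingEnd ℂ) α else 0
    | _, _ => 0

/-- The block-diagonal matrix `diag(U, F, U)`. -/
def blockDiag3 (p q : ℕ) (U : Matrix (Fin q) (Fin q) ℂ)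
    (F : Matrix (Fin (p - q)) (Fin (p - q)) ℂ) :
    Matrix (Fin q ⊕ (Fin (p - q) ⊕ Fin q)) (Fin q ⊕ (Fin (p - q) ⊕ Fin q)) ℂ :=
  Matrix.of fun i j => match i, j with
    | Sum.inl i', Sum.inl j' => U i' j'
    | Sum.inr (Sum.inl i'), Sum.inr (Sum.inl j') => F i' j'
    | Sum.inr (Sum.inr i'), Sum.inr (Sum.inr j') => U i' j'
    | _, _ => 0

/-!
Commuting with `EEmb p q i 0 = diag(i, 1, -i)`, whose three eigenvalues are distinct, forces
`M` to be block diagonal; commuting in addition with one `EEmb p q α β` with `β ≠ 0` identifies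
the two `q × q` blocks. For `M = diag(U, F, U)` the form condition `Mᴴ J M = J` splits
blockwise into `Uᴴ U = 1` and `Fᴴ F = 1`, and `det M = det(U)² det F`.
-/

lemma Matrix.apply_eq_zero_of_commute_diagonal {n R : Type*} [Fintype n] [DecidableEq n]
    [CommRing R] [NoZeroDivisors R] {M : Matrix n n R} {d : n → R}
    (h : Commute M (diagonal d)) {i j : n} (hij : d i ≠ d j) : M i j = 0 := by
  have entry := congrFun (congrFun h.eq i) j
  rw [mul_diagonal, diagonal_mul] at entry
  have : (d j - d i) * M i j = 0 := by linear_combination entry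
  exact (mul_eq_zero.mp this).resolve_left (sub_ne_zero.mpr hij.symm)

section
variable {p q : ℕ} (M : Matrix (Fin q ⊕ (Fin (p - q) ⊕ Fin q)) (Fin q ⊕ (Fin (p - q) ⊕ Fin q)) ℂ)
  (α β : ℂ)

@[simp] lemma mul_EEmb_apply_inl (a) (j : Fin q) :
    (M * EEmb p q α β) a (Sum.inl j) =
      α * M a (Sum.inl j) + (starRingEnd ℂ) β * M a (Sum.inr (Sum.inr j)) := by
  simp [EEmb, mul_apply, Fintype.sum_sum_type, mul_comm]

@[simp] lemma mul_EEmb_apply_inr_inl (a) (j : Fin (p - q)) :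
    (M * EEmb p q α β) a (Sum.inr (Sum.inl j)) = M a (Sum.inr (Sum.inl j)) := by
  simp [EEmb, mul_apply, Fintype.sum_sum_type]

@[simp] lemma mul_EEmb_apply_inr_inr (a) (j : Fin q) :
    (M * EEmb p q α β) a (Sum.inr (Sum.inr j)) =
      β * M a (Sum.inl j) + (starRingEnd ℂ) α * M a (Sum.inr (Sum.inr j)) := by
  simp [EEmb, mul_apply, Fintype.sum_sum_type, mul_comm]

@[simp] lemma EEmb_mul_apply_inl (i : Fin q) (b) :
    (EEmb p q α β * M) (Sum.inl i) b = α * M (Sum.inl i) b + β * M (Sum.inr (Sum.inr i)) b := by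
  simp [EEmb, mul_apply, Fintype.sum_sum_type]

@[simp] lemma EEmb_mul_apply_inr_inl (i : Fin (p - q)) (b) :
    (EEmb p q α β * M) (Sum.inr (Sum.inl i)) b = M (Sum.inr (Sum.inl i)) b := by
  simp [EEmb, mul_apply, Fintype.sum_sum_type]

@[simp] lemma EEmb_mul_apply_inr_inr (i : Fin q) (b) :
    (EEmb p q α β * M) (Sum.inr (Sum.inr i)) b =
      (starRingEnd ℂ) β * M (Sum.inl i) b + (starRingEnd ℂ) α * M (Sum.inr (Sum.inr i)) b := by
  simp [EEmb, mul_apply, Fintype.sum_sum_type]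

end

lemma EEmb_I_zero (p q : ℕ) :
    EEmb p q Complex.I 0 =
      diagonal (Sum.elim (fun _ => Complex.I) (Sum.elim (fun _ => 1) (fun _ => -Complex.I))) := by
  ext a b
  rcases a with a | a | a <;> rcases b with b | b | b <;> simp [EEmb, diagonal_apply]

lemma Jpq_eq_fromBlocks (p q : ℕ) : Jpq p q = fromBlocks 1 0 0 (fromBlocks 1 0 0 (-1)) := by
  ext a b
  rcases a with a | a | a <;> rcases b with b | b | b <;>
    simp [Jpq, one_apply, diagonal_apply, apply_ite]

section
variable {p q : ℕ} (U : Matrix (Fin q) (Fin q) ℂ) (F : Matrix (Fin (p - q)) (Fin (p - q)) ℂ)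

lemma blockDiag3_eq_fromBlocks : blockDiag3 p q U F = fromBlocks U 0 0 (fromBlocks F 0 0 U) := by
  ext a b
  rcases a with a | a | a <;> rcases b with b | b | b <;> rfl

lemma blockDiag3_conjTranspose_mul_Jpq_mul :
    (blockDiag3 p q U F)ᴴ * Jpq p q * blockDiag3 p q U F =
      fromBlocks (Uᴴ * U) 0 0 (fromBlocks (Fᴴ * F) 0 0 (-(Uᴴ * U))) := by
  simp [blockDiag3_eq_fromBlocks, Jpq_eq_fromBlocks, fromBlocks_conjTranspose,
    fromBlocks_multiply]

lemma det_blockDiag3 : (blockDiag3 p q U F).det = U.det ^ 2 * F.det := by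
  rw [blockDiag3_eq_fromBlocks, det_fromBlocks_zero₂₁, det_fromBlocks_zero₂₁]
  ring

lemma blockDiag3_commute_EEmb (α β : ℂ) : Commute (blockDiag3 p q U F) (EEmb p q α β) := by
  ext a b
  rcases a with i | i | i <;> rcases b with j | j | j <;> simp [blockDiag3]

end

lemma exists_eq_blockDiag3_of_commute_EEmb {p q : ℕ}
    {M : Matrix (Fin q ⊕ (Fin (p - q) ⊕ Fin q)) (Fin q ⊕ (Fin (p - q) ⊕ Fin q)) ℂ} {α β : ℂ}
    (hI : Commute M (EEmb p q Complex.I 0)) (hαβ : Commute M (EEmb p q α β)) (hβ : β ≠ 0) :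
    ∃ U F, M = blockDiag3 p q U F := by
  rw [EEmb_I_zero] at hI
  have off_diag {a b} (hab : _) : M a b = 0 := apply_eq_zero_of_commute_diagonal hI hab
  have corner_eq (i j : Fin q) :
      M (Sum.inr (Sum.inr i)) (Sum.inr (Sum.inr j)) = M (Sum.inl i) (Sum.inl j) := by
    have h13 := congrFun (congrFun hαβ.eq (Sum.inl i)) (Sum.inr (Sum.inr j))
    simp only [mul_EEmb_apply_inr_inr, EEmb_mul_apply_inl,
      off_diag (a := Sum.inl i) (b := Sum.inr (Sum.inr j))
        (by norm_num [Complex.ext_iff])] at h13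
    have key : β * (M (Sum.inr (Sum.inr i)) (Sum.inr (Sum.inr j)) - M (Sum.inl i) (Sum.inl j))
        = 0 := by linear_combination -h13
    exact sub_eq_zero.mp ((mul_eq_zero.mp key).resolve_left hβ)
  refine ⟨fun i j => M (Sum.inl i) (Sum.inl j),
    fun i j => M (Sum.inr (Sum.inl i)) (Sum.inr (Sum.inl j)), ?_⟩
  ext a b
  rcases a with i | i | i <;> rcases b with j | j | j <;>
    first
      | rfl
      | exact corner_eq i j
      | exact off_diag (by norm_num [Complex.ext_iff])

theorem stmt16_general (p q : ℕ)
    (M : Matrix (Fin q ⊕ (Fin (p - q) ⊕ Fin q)) (Fin q ⊕ (Fin (p - q) ⊕ Fin q)) ℂ)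
    (hM : Mᴴ * Jpq p q * M = Jpq p q) (hdet : M.det = 1) :
    (∀ α β : ℂ, ‖α‖ ^ 2 - ‖β‖ ^ 2 = 1 →
        M * EEmb p q α β = EEmb p q α β * M) ↔
      ∃ U : Matrix (Fin q) (Fin q) ℂ, ∃ F : Matrix (Fin (p - q)) (Fin (p - q)) ℂ,
        Uᴴ * U = 1 ∧ Fᴴ * F = 1 ∧ U.det ^ 2 * F.det = 1 ∧
        M = blockDiag3 p q U F := by
  constructor
  · intro h
    obtain ⟨U, F, rfl⟩ := exists_eq_blockDiag3_of_commute_EEmb (h Complex.I 0 (by simp))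
      (h (5 / 4) (3 / 4) (by norm_num)) (by norm_num)
    rw [blockDiag3_conjTranspose_mul_Jpq_mul, Jpq_eq_fromBlocks] at hM
    obtain ⟨hU, -, -, hrest⟩ := fromBlocks_inj.mp hM
    obtain ⟨hF, -, -, -⟩ := fromBlocks_inj.mp hrest
    exact ⟨U, F, hU, hF, det_blockDiag3 U F ▸ hdet, rfl⟩
  · rintro ⟨U, F, -, -, -, rfl⟩ α β -
    exact (blockDiag3_commute_EEmb U F α β).eq

theorem stmt16 (p q : ℕ) (hq : 1 ≤ q) (hpq : q < p)
    (M : Matrix (Fin q ⊕ (Fin (p - q) ⊕ Fin q)) (Fin q ⊕ (Fin (p - q) ⊕ Fin q)) ℂ)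
    (hM : Mᴴ * Jpq p q * M = Jpq p q) (hdet : M.det = 1) :
    (∀ α β : ℂ, ‖α‖ ^ 2 - ‖β‖ ^ 2 = 1 →
        M * EEmb p q α β = EEmb p q α β * M) ↔
      ∃ U : Matrix (Fin q) (Fin q) ℂ, ∃ F : Matrix (Fin (p - q)) (Fin (p - q)) ℂ,
        Uᴴ * U = 1 ∧ Fᴴ * F = 1 ∧ U.det ^ 2 * F.det = 1 ∧
        M = blockDiag3 p q U F :=
  stmt16_general p q M hM hdet
end

section
/- For A ∈ p^{1,0} of su(p,q), i.e., A represented by the block matrix M = [[0, A],[0, 0]] with A a p×q complex matrix, one has trace([M, Mᴴ]²) = 2·trace((AᴴA)²) and trace(MᴴM) = trace(AᴴA); consequently the holomorphic sectional curvature K(M) = −trace([M,Mᴴ]²)/(trace(MᴴM))² satisfies −2 ≤ K(M) ≤ −2/q for all nonzero M, when p ≥ q. -/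
/-! With `M = [[0, A], [0, 0]]` the commutator `[M, Mᴴ]` is block diagonal, `diag(AAᴴ, -AᴴA)`,
so `trace([M, Mᴴ]²) = 2‖AᴴA‖²` and `trace(MᴴM) = ‖A‖²` for the Frobenius norm. Submultiplicativity
of that norm gives `‖AᴴA‖ ≤ ‖A‖²`, i.e. `K ≥ -2`, while Cauchy–Schwarz on the diagonal gives
`|trace B|² ≤ q‖B‖²` for `B = AᴴA`, i.e. `K ≤ -2/q`. -/

open Matrix

open scoped Matrix.Norms.Frobenius

namespace Matrix

section Blocks

variable {m n α : Type*} [Fintype m] [Fintype n]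

theorem trace_fromBlocks [AddCommMonoid α] (A : Matrix m m α) (B : Matrix m n α)
    (C : Matrix n m α) (D : Matrix n n α) :
    (fromBlocks A B C D).trace = A.trace + D.trace := by
  simp [trace, Fintype.sum_sum_type]

variable [Ring α] [StarRing α] (A : Matrix m n α)

theorem conjTranspose_mul_self_fromBlocks_zero :
    (fromBlocks 0 A 0 0)ᴴ * fromBlocks 0 A 0 0 = fromBlocks 0 0 0 (Aᴴ * A) := by
  simp [fromBlocks_conjTranspose, fromBlocks_multiply]

theorem commutator_conjTranspose_fromBlocks_zero :
    fromBlocks 0 A 0 0 * (fromBlocks 0 A 0 0)ᴴ - (fromBlocks 0 A 0 0)ᴴ * fromBlocks 0 A 0 0 =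
      fromBlocks (A * Aᴴ) 0 0 (-(Aᴴ * A)) := by
  simp [fromBlocks_conjTranspose, fromBlocks_multiply, sub_eq_add_neg, fromBlocks_neg,
    fromBlocks_add]

end Blocks

theorem trace_mul_self_mul_comm {m n R : Type*} [Fintype m] [Fintype n] [CommSemiring R]
    (A : Matrix m n R) (B : Matrix n m R) :
    (A * B * (A * B)).trace = (B * A * (B * A)).trace := by
  rw [Matrix.mul_assoc, trace_mul_comm]
  simp only [Matrix.mul_assoc]

theorem frobenius_norm_sq_eq_sum {m n α : Type*} [Fintype m] [Fintype n]
    [SeminormedAddCommGroup α] (A : Matrix m n α) :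
    ‖A‖ ^ 2 = ∑ i, ∑ j, ‖A i j‖ ^ 2 := by
  rw [frobenius_norm_def, ← Real.rpow_natCast, ← Real.rpow_mul (by positivity)]
  norm_num

theorem norm_trace_sq_le_card_mul_frobenius_norm_sq {n α : Type*} [Fintype n]
    [SeminormedAddCommGroup α] (B : Matrix n n α) :
    ‖B.trace‖ ^ 2 ≤ Fintype.card n * ‖B‖ ^ 2 := by
  have h_diag : ∑ i, ‖B i i‖ ^ 2 ≤ ‖B‖ ^ 2 := by
    rw [frobenius_norm_sq_eq_sum]
    exact Finset.sum_le_sum fun i _ =>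
      Finset.single_le_sum (f := fun j => ‖B i j‖ ^ 2) (fun _ _ => by positivity)
        (Finset.mem_univ i)
  calc ‖B.trace‖ ^ 2 ≤ (∑ i, ‖B i i‖) ^ 2 := by
        gcongr; exact norm_sum_le _ _
    _ ≤ Fintype.card n * ∑ i, ‖B i i‖ ^ 2 := sq_sum_le_card_mul_sum_sq
    _ ≤ Fintype.card n * ‖B‖ ^ 2 := by gcongr

section RCLike

variable {m n 𝕜 : Type*} [Fintype m] [Fintype n] [RCLike 𝕜] (A : Matrix m n 𝕜)

theorem trace_conjTranspose_mul_self_eq_frobenius_norm_sq :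
    (Aᴴ * A).trace = ((‖A‖ ^ 2 : ℝ) : 𝕜) := by
  rw [frobenius_norm_sq_eq_sum, Finset.sum_comm]
  simp [trace, mul_apply, RCLike.conj_mul]

theorem trace_sq_conjTranspose_mul_self_eq_frobenius_norm_sq :
    (Aᴴ * A * (Aᴴ * A)).trace = ((‖Aᴴ * A‖ ^ 2 : ℝ) : 𝕜) := by
  have h := trace_conjTranspose_mul_self_eq_frobenius_norm_sq (Aᴴ * A)
  rwa [(isHermitian_conjTranspose_mul_self A).eq] at h

theorem frobenius_norm_conjTranspose_mul_self_le : ‖Aᴴ * A‖ ≤ ‖A‖ ^ 2 := by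
  simpa [sq, frobenius_norm_conjTranspose] using frobenius_norm_mul Aᴴ A

theorem frobenius_norm_pow_four_le_card_mul_sq :
    ‖A‖ ^ 4 ≤ Fintype.card n * ‖Aᴴ * A‖ ^ 2 := by
  have := norm_trace_sq_le_card_mul_frobenius_norm_sq (Aᴴ * A)
  rwa [trace_conjTranspose_mul_self_eq_frobenius_norm_sq, RCLike.norm_ofReal,
    abs_of_nonneg (by positivity), ← pow_mul] at this

end RCLike

end Matrix

theorem stmt17_general (p q : ℕ) (hq : 1 ≤ q)
    (A : Matrix (Fin p) (Fin q) ℂ) :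
    let M : Matrix (Fin p ⊕ Fin q) (Fin p ⊕ Fin q) ℂ := Matrix.fromBlocks 0 A 0 0
    ((M * Mᴴ - Mᴴ * M) * (M * Mᴴ - Mᴴ * M)).trace =
        2 * ((Aᴴ * A) * (Aᴴ * A)).trace ∧
    (Mᴴ * M).trace = (Aᴴ * A).trace ∧
    (A ≠ 0 →
      -2 ≤ -(((M * Mᴴ - Mᴴ * M) * (M * Mᴴ - Mᴴ * M)).trace.re) /
            ((Mᴴ * M).trace.re) ^ 2 ∧
      -(((M * Mᴴ - Mᴴ * M) * (M * Mᴴ - Mᴴ * M)).trace.re) /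
            ((Mᴴ * M).trace.re) ^ 2 ≤ -2 / (q : ℝ)) := by
  intro M
  have h_comm_sq : ((M * Mᴴ - Mᴴ * M) * (M * Mᴴ - Mᴴ * M)).trace =
      2 * ((Aᴴ * A) * (Aᴴ * A)).trace := by
    rw [commutator_conjTranspose_fromBlocks_zero, fromBlocks_multiply, trace_fromBlocks]
    simp only [Matrix.mul_zero, add_zero, zero_add, neg_mul_neg]
    rw [trace_mul_self_mul_comm]
    ring
  have h_norm : (Mᴴ * M).trace = (Aᴴ * A).trace := by
    rw [conjTranspose_mul_self_fromBlocks_zero, trace_fromBlocks, trace_zero, zero_add]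
  refine ⟨h_comm_sq, h_norm, fun hA => ?_⟩
  have hA_pos : 0 < ‖A‖ := norm_pos_iff.mpr hA
  have h_upper := frobenius_norm_conjTranspose_mul_self_le A
  have h_lower := frobenius_norm_pow_four_le_card_mul_sq A
  rw [Fintype.card_fin] at h_lower
  rw [h_comm_sq, h_norm, trace_sq_conjTranspose_mul_self_eq_frobenius_norm_sq,
    trace_conjTranspose_mul_self_eq_frobenius_norm_sq]
  simp only [Complex.coe_algebraMap, Complex.mul_re, Complex.re_ofNat, Complex.im_ofNat,
    Complex.ofReal_re, zero_mul, sub_zero]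
  constructor
  · rw [neg_div, neg_le_neg_iff, div_le_iff₀ (by positivity)]
    nlinarith [norm_nonneg (Aᴴ * A)]
  · rw [neg_div, neg_div, neg_le_neg_iff, div_le_div_iff₀ (by exact_mod_cast hq) (by positivity)]
    nlinarith

theorem stmt17 (p q : ℕ) (hq : 1 ≤ q) (hpq : q ≤ p)
    (A : Matrix (Fin p) (Fin q) ℂ) :
    let M : Matrix (Fin p ⊕ Fin q) (Fin p ⊕ Fin q) ℂ := Matrix.fromBlocks 0 A 0 0
    ((M * Mᴴ - Mᴴ * M) * (M * Mᴴ - Mᴴ * M)).trace =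
        2 * ((Aᴴ * A) * (Aᴴ * A)).trace ∧
    (Mᴴ * M).trace = (Aᴴ * A).trace ∧
    (A ≠ 0 →
      -2 ≤ -(((M * Mᴴ - Mᴴ * M) * (M * Mᴴ - Mᴴ * M)).trace.re) /
            ((Mᴴ * M).trace.re) ^ 2 ∧
      -(((M * Mᴴ - Mᴴ * M) * (M * Mᴴ - Mᴴ * M)).trace.re) /
            ((Mᴴ * M).trace.re) ^ 2 ≤ -2 / (q : ℝ)) :=
  stmt17_general p q hq A
end
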